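/- Let H_L, E_L be diagonal m×m real matrices, M a symmetric invertible k×k real matrix, and I_{R2L} ∈ ℝ^{m×k}, I_{L2R} ∈ ℝ^{k×m} with M I_{L2R} = I_{R2L}ᵀ H_L. Let u, w ∈ ℝᵐ, v, g ∈ ℝᵏ, and let δ_L, σ_L, δ_R, σ_R ∈ ℝ satisfy δ_L = −σ_R, σ_L = −δ_R, and δ_L + σ_L = −1. Then 2uᵀH_L E_L w + 2vᵀg + 2δ_L uᵀH_L (E_L w + I_{R2L} M⁻¹ g) + 2σ_L wᵀH_L E_L (u − I_{R2L} v) + 2δ_R vᵀ(−g − M I_{L2R} E_L w) − 2σ_R gᵀ(v − I_{L2R} u) = 0. -/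

import Mathlib

/-!
Everything reduces to three adjointness identities. Diagonal `H_L`, `E_L` make `H_L E_L`
symmetric, so `uᵀH_L E_L w = wᵀH_L E_L u`; the SBP-preserving relation `M I_{L2R} = I_{R2L}ᵀ H_L`
says that `I_{L2R}` is the adjoint of `I_{R2L}` for the inner products weighted by `M` and `H_L`,
which turns `gᵀI_{L2R}u` and `vᵀM I_{L2R}E_L w` into FD-side terms. After these substitutions
the energy is a combination of three bilinear quantities and `vᵀg`, with coefficients
`1 + δ_L + σ_L`, `δ_L + σ_R`, `σ_L + δ_R` and `1 - δ_R - σ_R`, all of which vanish.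
-/

open Matrix

variable {R : Type*} [CommRing R] {ι κ : Type*} [Fintype ι] [Fintype κ]

lemma Matrix.IsDiag.mul [DecidableEq ι] {A B : Matrix ι ι R} (hA : A.IsDiag) (hB : B.IsDiag) :
    (A * B).IsDiag := by
  rw [← hA.diagonal_diag, ← hB.diagonal_diag, diagonal_mul_diagonal]
  exact isDiag_diagonal _

lemma Matrix.IsSymm.dotProduct_mulVec_comm {S : Matrix ι ι R} (hS : S.IsSymm) (x y : ι → R) :
    x ⬝ᵥ S *ᵥ y = y ⬝ᵥ S *ᵥ x := by
  rw [dotProduct_mulVec, ← mulVec_transpose, hS.eq, dotProduct_comm]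

lemma dotProduct_mulVec_mulVec_of_mul_eq_transpose_mul {M : Matrix κ κ R} {H : Matrix ι ι R}
    {P : Matrix κ ι R} {Q : Matrix ι κ R} (hPQ : M * P = Qᵀ * H) (x : κ → R) (y : ι → R) :
    x ⬝ᵥ M *ᵥ (P *ᵥ y) = Q *ᵥ x ⬝ᵥ H *ᵥ y := by
  rw [mulVec_mulVec, hPQ, ← mulVec_mulVec, dotProduct_mulVec, vecMul_transpose]

/-- Viscous (diffusion) cancellation for the FD–FE interface coupling with
penalty parameters `δL = −σR`, `σL = −δR`, `δL + σL = −1`. -/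
theorem stmt_10 (m k : ℕ)
    (HL EL : Matrix (Fin m) (Fin m) ℝ) (hHL : HL.IsDiag) (hEL : EL.IsDiag)
    (M : Matrix (Fin k) (Fin k) ℝ) (hM : Mᵀ = M) (hMinv : IsUnit M.det)
    (IR2L : Matrix (Fin m) (Fin k) ℝ) (IL2R : Matrix (Fin k) (Fin m) ℝ)
    (hSBP : M * IL2R = IR2Lᵀ * HL)
    (u w : Fin m → ℝ) (v g : Fin k → ℝ)
    (δL σL δR σR : ℝ)
    (h1 : δL = -σR) (h2 : σL = -δR) (h3 : δL + σL = -1) :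
    2 * (u ⬝ᵥ HL *ᵥ (EL *ᵥ w)) + 2 * (v ⬝ᵥ g)
      + 2 * δL * (u ⬝ᵥ HL *ᵥ (EL *ᵥ w + IR2L *ᵥ (M⁻¹ *ᵥ g)))
      + 2 * σL * (w ⬝ᵥ HL *ᵥ (EL *ᵥ (u - IR2L *ᵥ v)))
      + 2 * δR * (v ⬝ᵥ (-g - M *ᵥ (IL2R *ᵥ (EL *ᵥ w))))
      - 2 * σR * (g ⬝ᵥ (v - IL2R *ᵥ u)) = 0 := by
  have hHE : (HL * EL).IsSymm := (hHL.mul hEL).isSymm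
  have hFD : u ⬝ᵥ HL *ᵥ (EL *ᵥ w) = w ⬝ᵥ HL *ᵥ (EL *ᵥ u) := by
    simpa only [mulVec_mulVec] using hHE.dotProduct_mulVec_comm u w
  have hFlux : g ⬝ᵥ IL2R *ᵥ u = u ⬝ᵥ HL *ᵥ (IR2L *ᵥ (M⁻¹ *ᵥ g)) := by
    calc g ⬝ᵥ IL2R *ᵥ u = M⁻¹ *ᵥ g ⬝ᵥ M *ᵥ (IL2R *ᵥ u) := by
          rw [IsSymm.dotProduct_mulVec_comm hM, mulVec_mulVec, mul_nonsing_inv M hMinv,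
            one_mulVec, dotProduct_comm]
      _ = IR2L *ᵥ (M⁻¹ *ᵥ g) ⬝ᵥ HL *ᵥ u :=
          dotProduct_mulVec_mulVec_of_mul_eq_transpose_mul hSBP _ _
      _ = u ⬝ᵥ HL *ᵥ (IR2L *ᵥ (M⁻¹ *ᵥ g)) := hHL.isSymm.dotProduct_mulVec_comm _ _
  have hTrace : w ⬝ᵥ HL *ᵥ (EL *ᵥ (IR2L *ᵥ v)) = v ⬝ᵥ M *ᵥ (IL2R *ᵥ (EL *ᵥ w)) := by
    rw [dotProduct_mulVec_mulVec_of_mul_eq_transpose_mul hSBP, mulVec_mulVec,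
      hHE.dotProduct_mulVec_comm, mulVec_mulVec]
  simp only [mulVec_add, mulVec_sub, dotProduct_add, dotProduct_sub, dotProduct_neg]
  linear_combination (2 * (u ⬝ᵥ HL *ᵥ (EL *ᵥ w)) + 2 * (v ⬝ᵥ g)) * h3
    + (2 * (g ⬝ᵥ IL2R *ᵥ u) - 2 * (v ⬝ᵥ g)) * h1
    + (-2 * (w ⬝ᵥ HL *ᵥ (EL *ᵥ (IR2L *ᵥ v))) - 2 * (v ⬝ᵥ g)) * h2
    - 2 * δL * hFlux - 2 * σL * hFD + 2 * δR * hTrace + 2 * σR * dotProduct_comm v g
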